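/- arXiv:2204.02343 — 6 statements merged into one kernel-verified Lean document; each statement's English description precedes it below -/
import Mathlib

section
/- Let k ∈ ℕ with k ≥ 1, let z = (z₁,…,z_k) ∈ ℝ^k with z₁ < … < z_k, let α = (α₁,…,α_k) ∈ ℝ^k and let ν ∈ (0, ρ_{z,α}). Then the function G_{z,α,ν} : ℝ → ℝ is differentiable on ℝ and satisfies 0 < inf_{x∈ℝ} G_{z,α,ν}'(x) ≤ sup_{x∈ℝ} G_{z,α,ν}'(x) < ∞. In particular, G_{z,α,ν} is strictly increasing, Lipschitz continuous, a bijection of ℝ onto ℝ, and its inverse function G_{z,α,ν}^{−1} : ℝ → ℝ is Lipschitz continuous as well. -/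
/-- The bump function `φ(x) = (1 - x²)⁴ · 1_{[-1,1]}(x)`. -/
noncomputable def phi (x : ℝ) : ℝ := if x ∈ Set.Icc (-1 : ℝ) 1 then (1 - x ^ 2) ^ 4 else 0

/-- The transformation `G_{z,α,ν}(x) = x + Σ_{i=1}^k α_i (x - z_i)|x - z_i| φ((x - z_i)/ν)`. -/
noncomputable def Gfun (k : ℕ) (z α : Fin k → ℝ) (ν : ℝ) (x : ℝ) : ℝ :=
  x + ∑ i : Fin k, α i * (x - z i) * |x - z i| * phi ((x - z i) / ν)

/-!
Rescaling, the `i`-th summand of `G` is `α_i ν² ψ((x - z_i)/ν)` with `ψ(s) = s|s|φ(s)`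
(`mulAbsPhi`). The function `ψ` is `C¹`, its derivative vanishes off `(-1, 1)` and is bounded
by `8` there, so the `i`-th summand contributes at most `8ν|α_i| < 1` to `G'`, and only on
`(z_i - ν, z_i + ν)`. These intervals are disjoint, hence `|G' - 1| ≤ c` for some `c < 1`.
A real function whose derivative lies in `[1 - c, 1 + c]` is Lipschitz, strictly increasing,
tends to `±∞` at `±∞` (hence is onto) and expands distances by at least `1 - c`, so its inverse
is Lipschitz.
-/

open Set Filter Finset

theorem hasDerivAt_of_eqOn_Iic_of_eqOn_Ici {f g h : ℝ → ℝ} {a x d : ℝ}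
    (hfg : EqOn f g (Iic a)) (hfh : EqOn f h (Ici a))
    (hg : x ≤ a → HasDerivAt g d x) (hh : a ≤ x → HasDerivAt h d x) : HasDerivAt f d x := by
  have hl : x ≤ a → HasDerivWithinAt f d (Iic a) x := fun hx =>
    (hg hx).hasDerivWithinAt.congr hfg (hfg hx)
  have hr : a ≤ x → HasDerivWithinAt f d (Ici a) x := fun hx =>
    (hh hx).hasDerivWithinAt.congr hfh (hfh hx)
  rcases lt_trichotomy x a with hxa | rfl | hxa
  · exact (hl hxa.le).hasDerivAt (Iic_mem_nhds hxa)
  · rw [← hasDerivWithinAt_univ, ← Iic_union_Ici]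
    exact (hl le_rfl).union (hr le_rfl)
  · exact (hr hxa.le).hasDerivAt (Ici_mem_nhds hxa)

theorem hasDerivAt_mul_abs (x : ℝ) : HasDerivAt (fun y => y * |y|) (2 * |x|) x := by
  refine hasDerivAt_of_eqOn_Iic_of_eqOn_Ici (g := fun y => -y ^ 2) (h := fun y => y ^ 2) (a := 0)
    (fun y hy => by rw [abs_of_nonpos (mem_Iic.1 hy)]; ring)
    (fun y hy => by rw [abs_of_nonneg (mem_Ici.1 hy)]; ring) (fun hx => ?_) (fun hx => ?_)
  · exact (hasDerivAt_pow 2 x).neg.congr_deriv (by simp [abs_of_nonpos hx])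
  · exact (hasDerivAt_pow 2 x).congr_deriv (by simp [abs_of_nonneg hx])

theorem hasDerivAt_max_zero_pow {n : ℕ} (hn : 2 ≤ n) (x : ℝ) :
    HasDerivAt (fun y => max y 0 ^ n) (n * max x 0 ^ (n - 1)) x := by
  refine hasDerivAt_of_eqOn_Iic_of_eqOn_Ici (g := fun _ => 0) (h := fun y => y ^ n) (a := 0)
    (fun y hy => by simp [max_eq_right (mem_Iic.1 hy), zero_pow (by omega : n ≠ 0)])
    (fun y hy => by simp [max_eq_left (mem_Ici.1 hy)]) (fun hx => ?_) (fun hx => ?_)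
  · exact (hasDerivAt_const x (0 : ℝ)).congr_deriv
      (by simp [max_eq_right hx, zero_pow (by omega : n - 1 ≠ 0)])
  · exact (hasDerivAt_pow n x).congr_deriv (by rw [max_eq_left hx])

theorem norm_sum_le_of_ne_zero_imp_eq {ι E : Type*} [SeminormedAddCommGroup E] {s : Finset ι}
    {f : ι → E} {c : ℝ} (hc : 0 ≤ c) (hf : ∀ i ∈ s, ‖f i‖ ≤ c)
    (hunique : ∀ i ∈ s, ∀ j ∈ s, f i ≠ 0 → f j ≠ 0 → i = j) : ‖∑ i ∈ s, f i‖ ≤ c := by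
  by_cases h : ∃ i ∈ s, f i ≠ 0
  · obtain ⟨i, hi, hfi⟩ := h
    rw [sum_eq_single i (fun j hj hji => by_contra fun hfj => hji (hunique j hj i hi hfj hfi))
      (absurd hi)]
    exact hf i hi
  · push Not at h
    rw [sum_eq_zero h, norm_zero]
    exact hc

theorem Monotone.lt_abs_sub_of_succ_gap {k : ℕ} {z : Fin k → ℝ} (hz : Monotone z) {d : ℝ}
    (hgap : ∀ i j : Fin k, (i : ℕ) + 1 = j → d < z j - z i) {i j : Fin k} (hij : i ≠ j) :
    d < |z i - z j| := by
  wlog h : i < j generalizing i j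
  · rw [abs_sub_comm]; exact this hij.symm (lt_of_le_of_ne (not_lt.1 h) hij.symm)
  have hi : (i : ℕ) + 1 < k := lt_of_le_of_lt h j.isLt
  have hsucc := hgap i ⟨i + 1, hi⟩ rfl
  have hle := hz (show (⟨i + 1, hi⟩ : Fin k) ≤ j from h)
  rw [abs_sub_comm]
  exact lt_of_lt_of_le (by linarith) (le_abs_self _)

theorem antilipschitzWith_of_le_deriv {f : ℝ → ℝ} {m : ℝ} (hf : Differentiable ℝ f) (hm : 0 < m)
    (hlow : ∀ x, m ≤ deriv f x) : AntilipschitzWith m.toNNReal⁻¹ f := by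
  refine AntilipschitzWith.of_le_mul_dist fun x y => ?_
  wlog hxy : x ≤ y generalizing x y
  · rw [dist_comm, dist_comm (f x)]; exact this y x (le_of_not_ge hxy)
  rw [Real.dist_eq, Real.dist_eq, abs_sub_comm, abs_of_nonneg (sub_nonneg.2 hxy), abs_sub_comm,
    NNReal.coe_inv, Real.coe_toNNReal _ hm.le, le_inv_mul_iff₀ hm]
  exact (mul_sub_le_image_sub_of_le_deriv hf hlow hxy).trans (le_abs_self _)

theorem surjective_of_le_deriv {f : ℝ → ℝ} {m : ℝ} (hf : Differentiable ℝ f) (hm : 0 < m)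
    (hlow : ∀ x, m ≤ deriv f x) : Function.Surjective f := by
  have hgrow := mul_sub_le_image_sub_of_le_deriv hf hlow
  refine hf.continuous.surjective ?_ ?_
  · refine tendsto_atTop_mono' _ ?_
      (tendsto_atTop_add_const_left _ (f 0) (tendsto_id.const_mul_atTop hm))
    filter_upwards [eventually_ge_atTop 0] with x hx
    show f 0 + m * x ≤ f x
    linarith [hgrow hx]
  · refine tendsto_atBot_mono' _ ?_
      (tendsto_atBot_add_const_left _ (f 0) (tendsto_id.const_mul_atBot hm))
    filter_upwards [eventually_le_atBot 0] with x hx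
    show f x ≤ f 0 + m * x
    linarith [hgrow hx]

theorem phi_eq_max_pow (t : ℝ) : phi t = max (1 - t ^ 2) 0 ^ 4 := by
  unfold phi
  split_ifs with ht
  · rw [max_eq_left]; nlinarith [ht.1, ht.2]
  · have : 1 - t ^ 2 ≤ 0 := by
      rw [Set.mem_Icc, not_and_or, not_le, not_le] at ht
      rcases ht with ht | ht <;> nlinarith
    rw [max_eq_right this]; norm_num

noncomputable def mulAbsPhi (s : ℝ) : ℝ := s * |s| * phi s

noncomputable def mulAbsPhiDeriv (s : ℝ) : ℝ :=
  2 * |s| * max (1 - s ^ 2) 0 ^ 3 * (max (1 - s ^ 2) 0 - 4 * s ^ 2)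

theorem hasDerivAt_mulAbsPhi (s : ℝ) : HasDerivAt mulAbsPhi (mulAbsPhiDeriv s) s := by
  have hφ : HasDerivAt (fun t => max (1 - t ^ 2) 0 ^ 4)
      (4 * max (1 - s ^ 2) 0 ^ 3 * -(2 * s)) s := by
    have h := (hasDerivAt_max_zero_pow (n := 4) (by norm_num) (1 - s ^ 2)).comp s
      ((hasDerivAt_pow 2 s).const_sub 1)
    exact h.congr_deriv (by push_cast; ring)
  have hψ : mulAbsPhi = fun t => t * |t| * max (1 - t ^ 2) 0 ^ 4 :=
    funext fun t => by rw [mulAbsPhi, phi_eq_max_pow]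
  rw [hψ]
  exact ((hasDerivAt_mul_abs s).mul hφ).congr_deriv (by rw [mulAbsPhiDeriv]; ring)

theorem mulAbsPhiDeriv_eq_zero {s : ℝ} (hs : 1 ≤ |s|) : mulAbsPhiDeriv s = 0 := by
  have : 1 - s ^ 2 ≤ 0 := by nlinarith [sq_abs s]
  simp [mulAbsPhiDeriv, max_eq_right this]

theorem abs_mulAbsPhiDeriv_le (s : ℝ) : |mulAbsPhiDeriv s| ≤ 8 := by
  rcases le_or_gt 1 |s| with hs | hs
  · simp [mulAbsPhiDeriv_eq_zero hs]
  have hs2 : s ^ 2 < 1 := by nlinarith [sq_abs s, abs_nonneg s]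
  have h0 : 0 ≤ 1 - s ^ 2 := by linarith
  have h1 : |1 - s ^ 2 - 4 * s ^ 2| ≤ 4 := abs_le.2 ⟨by nlinarith, by nlinarith⟩
  rw [mulAbsPhiDeriv, max_eq_left h0, abs_mul, abs_mul, abs_mul, abs_pow, abs_abs,
    abs_of_nonneg h0, abs_two]
  calc 2 * |s| * (1 - s ^ 2) ^ 3 * |1 - s ^ 2 - 4 * s ^ 2| ≤ 2 * 1 * 1 * 4 := by
        gcongr
        exact pow_le_one₀ h0 (sub_le_self _ (sq_nonneg s))
    _ = 8 := by norm_num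

section Gfun

variable {k : ℕ} {z α : Fin k → ℝ} {ν : ℝ}

theorem Gfun_eq_add_sum_mulAbsPhi (hν : 0 < ν) :
    Gfun k z α ν = fun x => x + ∑ i, α i * ν ^ 2 * mulAbsPhi ((x - z i) / ν) := by
  funext x
  simp only [Gfun, mulAbsPhi, abs_div, abs_of_pos hν]
  congr 1
  refine sum_congr rfl fun i _ => ?_
  field_simp

theorem hasDerivAt_Gfun (hν : 0 < ν) (x : ℝ) :
    HasDerivAt (Gfun k z α ν) (1 + ∑ i, α i * ν * mulAbsPhiDeriv ((x - z i) / ν)) x := by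
  rw [Gfun_eq_add_sum_mulAbsPhi hν]
  refine (hasDerivAt_id x).add (HasDerivAt.fun_sum fun i _ => ?_)
  have h := ((hasDerivAt_mulAbsPhi _).comp x
    (((hasDerivAt_id' x).sub_const (z i)).div_const ν)).const_mul (α i * ν ^ 2)
  exact h.congr_deriv (by field_simp)

theorem abs_deriv_Gfun_sub_one_le {c : ℝ} (hν : 0 < ν)
    (hsep : ∀ i j, i ≠ j → 2 * ν < |z i - z j|) (hc : 0 ≤ c)
    (hαc : ∀ i, ν * (8 * |α i|) ≤ c) (x : ℝ) : |deriv (Gfun k z α ν) x - 1| ≤ c := by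
  have near : ∀ i, α i * ν * mulAbsPhiDeriv ((x - z i) / ν) ≠ 0 → |x - z i| < ν := by
    intro i hi
    by_contra! hfar
    rw [mulAbsPhiDeriv_eq_zero (by rwa [abs_div, abs_of_pos hν, one_le_div hν]), mul_zero] at hi
    exact hi rfl
  rw [(hasDerivAt_Gfun hν x).deriv, add_sub_cancel_left, ← Real.norm_eq_abs]
  refine norm_sum_le_of_ne_zero_imp_eq hc (fun i _ => ?_) (fun i _ j _ hi hj => ?_)
  · rw [Real.norm_eq_abs, abs_mul, abs_mul, abs_of_pos hν]
    calc |α i| * ν * |mulAbsPhiDeriv ((x - z i) / ν)| ≤ |α i| * ν * 8 := by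
          gcongr; exact abs_mulAbsPhiDeriv_le _
      _ ≤ c := by linarith [hαc i]
  · by_contra hij
    have htri := abs_sub_le (z i) x (z j)
    rw [abs_sub_comm (z i) x] at htri
    linarith [hsep i j hij, near i hi, near j hj]

end Gfun

/-- For `k ≥ 1`, `z₁ < … < z_k`, `α ∈ ℝ^k` and `ν ∈ (0, ρ_{z,α})`
(the condition `ν ∈ (0, ρ_{z,α})` being expressed by `0 < ν`, `ν · 8|α_i| < 1` for all `i`
— which encodes `ν < 1/(8|α_i|)` with the convention `1/0 = ∞` — and
`ν < (z_{i+1} - z_i)/2` for consecutive indices), the function `G_{z,α,ν}` is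
differentiable with `0 < inf G' ≤ sup G' < ∞`; in particular it is strictly increasing,
Lipschitz continuous, a bijection of `ℝ`, with Lipschitz continuous inverse. -/
theorem stmt_2 (k : ℕ) (hk : 1 ≤ k) (z α : Fin k → ℝ) (hz : StrictMono z)
    (ν : ℝ) (hν0 : 0 < ν)
    (hν1 : ∀ i : Fin k, ν * (8 * |α i|) < 1)
    (hν2 : ∀ i j : Fin k, (i : ℕ) + 1 = (j : ℕ) → ν < (z j - z i) / 2) :
    (∀ x : ℝ, DifferentiableAt ℝ (Gfun k z α ν) x) ∧
    (∃ m M : ℝ, 0 < m ∧ (∀ x : ℝ, m ≤ deriv (Gfun k z α ν) x) ∧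
      (∀ x : ℝ, deriv (Gfun k z α ν) x ≤ M)) ∧
    StrictMono (Gfun k z α ν) ∧
    (∃ K : NNReal, LipschitzWith K (Gfun k z α ν)) ∧
    Function.Bijective (Gfun k z α ν) ∧
    (∃ K' : NNReal, LipschitzWith K' (Function.invFun (Gfun k z α ν))) := by
  set G := Gfun k z α ν
  have hsep : ∀ i j, i ≠ j → 2 * ν < |z i - z j| := fun i j =>
    hz.monotone.lt_abs_sub_of_succ_gap fun i j h => by linarith [hν2 i j h]
  set c := univ.sup' ⟨⟨0, hk⟩, mem_univ _⟩ fun i => ν * (8 * |α i|)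
  have hαc : ∀ i, ν * (8 * |α i|) ≤ c := fun i => le_sup' (fun i => ν * (8 * |α i|)) (mem_univ i)
  have hc1 : c < 1 := (sup'_lt_iff _).2 fun i _ => hν1 i
  have hc0 : 0 ≤ c := (by positivity : 0 ≤ ν * (8 * |α ⟨0, hk⟩|)).trans (hαc _)
  have hbound := abs_deriv_Gfun_sub_one_le hν0 hsep hc0 hαc
  have hlow : ∀ x, 1 - c ≤ deriv G x := fun x => by linarith [(abs_le.1 (hbound x)).1]
  have hup : ∀ x, deriv G x ≤ 1 + c := fun x => by linarith [(abs_le.1 (hbound x)).2]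
  have hm : 0 < 1 - c := by linarith
  have hdiff : Differentiable ℝ G := fun x => (hasDerivAt_Gfun hν0 x).differentiableAt
  have hmono : StrictMono G := strictMono_of_deriv_pos fun x => hm.trans_le (hlow x)
  have hsurj := surjective_of_le_deriv hdiff hm hlow
  have hlip : LipschitzWith (1 + c).toNNReal G :=
    lipschitzWith_of_nnnorm_deriv_le hdiff fun x => by
      rw [← NNReal.coe_le_coe, coe_nnnorm, Real.coe_toNNReal _ (by linarith), Real.norm_eq_abs]
      exact abs_le.2 ⟨by linarith [hlow x], hup x⟩
  exact ⟨hdiff, ⟨1 - c, 1 + c, hm, hlow, hup⟩,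
    hmono, ⟨_, hlip⟩, ⟨hmono.injective, hsurj⟩,
    ⟨_, (antilipschitzWith_of_le_deriv hdiff hm hlow).to_rightInverse
      (Function.rightInverse_invFun hsurj)⟩⟩
end

section
/- Let p ∈ (1,∞), c, L ∈ (0,∞), A, m ∈ ℝ with A ≤ m, and let f, g : ℝ → ℝ. Suppose that (1) for all x, y ∈ [A, m+2], 2(x−y)·(f(x)−f(y)) + (p−1)·(g(x)−g(y))² ≤ c·|x−y|²; (2) for all x, y ∈ [m, ∞), 2(x−y)·(f(x)−f(y)) + (p−1)·(g(x)−g(y))² ≤ c·|x−y|²; and (3) for all x, y ∈ [A, m+2], |g(x)−g(y)| ≤ L·|x−y|. Then there exists c' ∈ (0,∞) such that for all x ∈ [m+2, ∞) and all y ∈ [A, m], 2(x−y)·(f(x)−f(y)) + (p−1)·(g(x)−g(y))² ≤ c'·|x−y|². -/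
theorem stmt12_aux (a b u v F1 F2 c q L K : ℝ) (hq : 0 < q)
    (ha : 1 ≤ a) (hb : 1 ≤ b) (hbK : b ≤ K)
    (c1 : 2*a*F1 + q*u^2 ≤ c*a^2) (c2 : 2*b*F2 ≤ c*b^2) (Hv2 : v^2 ≤ L^2*b^2) :
    2*(a+b)*(F1+F2) + q*(u+v)^2 ≤ (c + q*L^2*K/2 + 1)*(a+b)^2 := by
  have hab : 0 < a * b := by nlinarith
  have hab2 : (0:ℝ) ≤ a + b - 2 := by linarith
  have hK : (1:ℝ) ≤ K := le_trans hb hbK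
  have S1 : q*(a*b*(u+v)^2) ≤ q*(b*(a+b)*u^2) + q*(a*(a+b)*v^2) := by
    nlinarith [mul_nonneg hq.le (sq_nonneg (b*u - a*v))]
  have S2 : b*(a+b)*(2*a*F1 + q*u^2) ≤ b*(a+b)*(c*a^2) :=
    mul_le_mul_of_nonneg_left c1 (by nlinarith)
  have S3 : a*(a+b)*(2*b*F2) ≤ a*(a+b)*(c*b^2) :=
    mul_le_mul_of_nonneg_left c2 (by nlinarith)
  have S4 : q*(a*(a+b)*v^2) ≤ q*L^2*K/2 * (a*b*(a+b)^2) := by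
    nlinarith [mul_le_mul_of_nonneg_left Hv2 (by nlinarith : (0:ℝ) ≤ q*(a*(a+b))),
      mul_nonneg (mul_nonneg hq.le (sq_nonneg L))
        (mul_nonneg (mul_nonneg (mul_nonneg (by linarith : (0:ℝ) ≤ a) (by linarith : (0:ℝ) ≤ b)) (by linarith : (0:ℝ) ≤ a+b)) (by linarith : (0:ℝ) ≤ K - b)),
      mul_nonneg (mul_nonneg (mul_nonneg hq.le (sq_nonneg L)) (by linarith : (0:ℝ) ≤ K))
        (mul_nonneg (mul_nonneg (mul_nonneg (by linarith : (0:ℝ) ≤ a) (by linarith : (0:ℝ) ≤ b)) (by linarith : (0:ℝ) ≤ a+b)) hab2)]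
  have key : a * b * (2*(a+b)*(F1+F2) + q*(u+v)^2)
      ≤ a * b * ((c + q*L^2*K/2 + 1)*(a+b)^2) := by
    nlinarith [S1, S2, S3, S4, mul_nonneg hab.le (sq_nonneg (a+b))]
  exact le_of_mul_le_mul_left key hab

/-- Let `p ∈ (1,∞)`, `c, L ∈ (0,∞)`, `A ≤ m`, and `f, g : ℝ → ℝ`.
If the one-sided monotonicity estimate holds on `[A, m+2]` and on `[m, ∞)`, and `g` is
`L`-Lipschitz on `[A, m+2]`, then there is `c' ∈ (0,∞)` such that the one-sided
monotonicity estimate holds for all `x ∈ [m+2, ∞)` and `y ∈ [A, m]`. -/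
theorem stmt_12 (p c L A m : ℝ) (hp : 1 < p) (hc : 0 < c) (hL : 0 < L) (hAm : A ≤ m)
    (f g : ℝ → ℝ)
    (h1 : ∀ x ∈ Set.Icc A (m + 2), ∀ y ∈ Set.Icc A (m + 2),
      2 * (x - y) * (f x - f y) + (p - 1) * (g x - g y) ^ 2 ≤ c * |x - y| ^ 2)
    (h2 : ∀ x ∈ Set.Ici m, ∀ y ∈ Set.Ici m,
      2 * (x - y) * (f x - f y) + (p - 1) * (g x - g y) ^ 2 ≤ c * |x - y| ^ 2)
    (h3 : ∀ x ∈ Set.Icc A (m + 2), ∀ y ∈ Set.Icc A (m + 2),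
      |g x - g y| ≤ L * |x - y|) :
    ∃ c' : ℝ, 0 < c' ∧ ∀ x ∈ Set.Ici (m + 2), ∀ y ∈ Set.Icc A m,
      2 * (x - y) * (f x - f y) + (p - 1) * (g x - g y) ^ 2 ≤ c' * |x - y| ^ 2 := by
  have hq : 0 < p - 1 := by linarith
  have hK : (1:ℝ) ≤ m + 1 - A := by linarith
  refine ⟨c + (p-1)*L^2*(m+1-A)/2 + 1, by positivity, ?_⟩
  intro x hx y hy
  simp only [Set.mem_Ici] at hx
  obtain ⟨hyA, hym⟩ := hy
  have hz1 : (m+1) ∈ Set.Icc A (m+2) := ⟨by linarith, by linarith⟩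
  have hy1 : y ∈ Set.Icc A (m+2) := ⟨hyA, by linarith⟩
  have H2 := h2 x (by simp only [Set.mem_Ici]; linarith) (m+1) (by simp)
  have H1 := h1 (m+1) hz1 y hy1
  have H3 := h3 (m+1) hz1 y hy1
  rw [show |x - (m+1)| = x - (m+1) by rw [abs_of_pos]; linarith] at H2
  rw [show |(m+1) - y| = (m+1) - y by rw [abs_of_pos]; linarith] at H1 H3
  rw [show |x - y| = x - y by rw [abs_of_pos]; linarith]
  have Hv2 : (g (m+1) - g y) ^ 2 ≤ L^2 * ((m+1) - y) ^ 2 := by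
    have h := abs_le.mp H3
    nlinarith [h.1, h.2]
  have c1 : 2*(x - (m+1))*(f x - f (m+1)) + (p-1)*(g x - g (m+1))^2 ≤ c * (x - (m+1))^2 := by
    nlinarith [H2]
  have c2 : 2*((m+1) - y)*(f (m+1) - f y) ≤ c * ((m+1) - y)^2 := by
    nlinarith [H1, sq_nonneg (g (m+1) - g y), hq]
  have key := stmt12_aux (x - (m+1)) ((m+1) - y) (g x - g (m+1)) (g (m+1) - g y)
    (f x - f (m+1)) (f (m+1) - f y) c (p-1) L (m+1-A) hq
    (by linarith) (by linarith) (by linarith) c1 c2 Hv2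
  calc 2 * (x - y) * (f x - f y) + (p - 1) * (g x - g y) ^ 2
      = 2*((x - (m+1)) + ((m+1) - y))*((f x - f (m+1)) + (f (m+1) - f y))
        + (p-1)*((g x - g (m+1)) + (g (m+1) - g y))^2 := by ring
    _ ≤ (c + (p-1)*L^2*(m+1-A)/2 + 1)*((x - (m+1)) + ((m+1) - y))^2 := key
    _ = (c + (p-1)*L^2*(m+1-A)/2 + 1) * (x - y) ^ 2 := by ring
end

section
/- Let p₀ ∈ [2,∞), ℓ_μ ∈ (0,∞) and assume μ, σ : ℝ → ℝ satisfy condition (A1): there exists c ∈ (0,∞) such that for all x ∈ ℝ, 2x·μ(x) + (p₀−1)·σ(x)² ≤ c·(1+x²). Then there exists c' ∈ (0,∞) such that for all n ∈ ℕ with n ≥ 1 and all x ∈ ℝ, the tamed coefficients satisfy 2x·μ_n(x) + (p₀−1)·σ_n(x)² ≤ c'·(1+x²). -/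
/-- The tamed coefficient `f_n(x) = f(x) / (1 + n^{-1/2} |x|^ℓ)`. -/
noncomputable def tame (f : ℝ → ℝ) (ℓ : ℝ) (n : ℕ) (x : ℝ) : ℝ :=
  f x / (1 + (1 / Real.sqrt (n : ℝ)) * |x| ^ ℓ)

/-- If `μ, σ` satisfy the coercivity condition (A1) with `p₀ ∈ [2,∞)`,
then there is `c' ∈ (0,∞)` such that for all `n ≥ 1` and all `x`,
`2x·μ_n(x) + (p₀-1)·σ_n(x)² ≤ c'·(1+x²)`. -/
theorem stmt_14 (p₀ ℓμ : ℝ) (hp₀ : 2 ≤ p₀) (hℓμ : 0 < ℓμ)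
    (μ σ : ℝ → ℝ)
    (c : ℝ) (hc : 0 < c)
    (hA1 : ∀ x : ℝ, 2 * x * μ x + (p₀ - 1) * (σ x) ^ 2 ≤ c * (1 + x ^ 2)) :
    ∃ c' : ℝ, 0 < c' ∧ ∀ n : ℕ, 1 ≤ n → ∀ x : ℝ,
      2 * x * tame μ ℓμ n x + (p₀ - 1) * (tame σ ℓμ n x) ^ 2 ≤ c' * (1 + x ^ 2) := by
  refine ⟨c, hc, fun n hn x => ?_⟩
  unfold tame
  set D := 1 + (1 / Real.sqrt (n : ℝ)) * |x| ^ ℓμ with hDdef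
  have hD1 : 1 ≤ D := by
    have h0 : 0 ≤ (1 / Real.sqrt (n : ℝ)) * |x| ^ ℓμ :=
      mul_nonneg (by positivity) (Real.rpow_nonneg (abs_nonneg x) _)
    rw [hDdef]; linarith
  have hD0 : (0 : ℝ) < D := lt_of_lt_of_le one_pos hD1
  have h := hA1 x
  have hp1 : (0 : ℝ) ≤ p₀ - 1 := by linarith
  have h1 : (σ x / D) ^ 2 ≤ (σ x) ^ 2 / D := by
    rw [div_pow, div_le_div_iff₀ (by positivity) hD0]
    nlinarith [mul_nonneg (mul_nonneg (sq_nonneg (σ x)) hD0.le) (sub_nonneg.2 hD1)]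
  calc 2 * x * (μ x / D) + (p₀ - 1) * (σ x / D) ^ 2
      ≤ 2 * x * μ x / D + (p₀ - 1) * ((σ x) ^ 2 / D) := by
        have := mul_le_mul_of_nonneg_left h1 hp1
        rw [mul_div_assoc]; linarith
    _ = (2 * x * μ x + (p₀ - 1) * (σ x) ^ 2) / D := by ring
    _ ≤ c * (1 + x ^ 2) / D := by gcongr
    _ ≤ c * (1 + x ^ 2) := by
        rw [div_le_iff₀ hD0]
        nlinarith [mul_nonneg (mul_pos hc (by positivity : (0:ℝ) < 1 + x ^ 2)).le (sub_nonneg.2 hD1)]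
end

section
/- Let ℓ_μ ∈ (0,∞), ℓ_σ ∈ [0, ℓ_μ/2] and assume σ : ℝ → ℝ satisfies condition (A3): there exists c ∈ (0,∞) such that for all x, y ∈ ℝ, |σ(x)−σ(y)| ≤ c·(1+|x|^{ℓ_σ}+|y|^{ℓ_σ})·|x−y|. Then there exists c' ∈ (0,∞) such that for all n ∈ ℕ with n ≥ 1 and all x, y ∈ ℝ, |σ_n(x) − σ_n(y)| ≤ c'·(1 + |x|^{ℓ_σ} + |y|^{ℓ_σ})·(n^{−1/2} + |x − y|). -/
/-!
Write `σ_n(x) = σ(x) g(|x|)` with `g(a) = (1 + s a^ℓ)⁻¹`, `s = n^{-1/2}`, so that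
`σ_n(x) - σ_n(y) = (σ(x) - σ(y)) g(|x|) + σ(y) (g(|x|) - g(|y|))`.
Since `0 < g ≤ 1`, the first term is controlled by (A3). By (A3) against `0`,
`|σ(y)| ≲ (1 + |y|^ℓσ)(1 + |y|)`, so the second term needs the weighted estimate
`(1 + b) |g(a) - g(b)| ≲ s + |a - b|` for `a, b ≥ 0`. For `a, b ≤ 2` this holds because
`1 - g(a) ≤ s a^ℓ`; if `|a - b|` is comparable to `max a b` it holds because `|g(a) - g(b)| ≤ 1`;
otherwise both are comparable to `max a b` and `g(b) - g(a) ≤ ℓ (a - b) / b` for `b ≤ a`, which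
comes from `1 - t^ℓ ≤ ℓ (t⁻¹ - 1)`.
-/

open Real

lemma one_sub_rpow_le_mul_inv_sub_one {t ℓ : ℝ} (ht : 0 < t) (hℓ : 0 ≤ ℓ) :
    1 - t ^ ℓ ≤ ℓ * (t⁻¹ - 1) := by
  have hexp : 1 + ℓ * log t ≤ t ^ ℓ := by
    rw [rpow_def_of_pos ht]
    linarith [add_one_le_exp (log t * ℓ)]
  nlinarith [one_sub_inv_le_log_of_pos ht]

noncomputable def tamingFactor (s ℓ a : ℝ) : ℝ := (1 + s * a ^ ℓ)⁻¹

section TamingFactor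

variable {s ℓ a b : ℝ}

lemma tamingFactor_pos (hs : 0 ≤ s) (ha : 0 ≤ a) : 0 < tamingFactor s ℓ a := by
  unfold tamingFactor
  positivity

lemma tamingFactor_le_one (hs : 0 ≤ s) (ha : 0 ≤ a) : tamingFactor s ℓ a ≤ 1 :=
  inv_le_one_of_one_le₀ (le_add_of_nonneg_right (by positivity))

lemma tamingFactor_anti (hs : 0 ≤ s) (hℓ : 0 ≤ ℓ) (hb : 0 ≤ b) (hab : b ≤ a) :
    tamingFactor s ℓ a ≤ tamingFactor s ℓ b :=
  inv_anti₀ (by positivity) (by gcongr)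

lemma one_sub_tamingFactor_le (hs : 0 ≤ s) (ha : 0 ≤ a) :
    1 - tamingFactor s ℓ a ≤ s * a ^ ℓ := by
  have hu : 0 ≤ s * a ^ ℓ := by positivity
  have hg : tamingFactor s ℓ a * (1 + s * a ^ ℓ) = 1 := inv_mul_cancel₀ (by positivity)
  nlinarith [tamingFactor_pos (ℓ := ℓ) hs ha]

lemma tamingFactor_sub_le (hs : 0 ≤ s) (hℓ : 0 ≤ ℓ) (hb : 0 < b) (hab : b ≤ a) :
    tamingFactor s ℓ b - tamingFactor s ℓ a ≤ ℓ * ((a - b) / b) := by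
  have ha : 0 < a := hb.trans_le hab
  have hK : 0 ≤ ℓ * ((a - b) / b) := mul_nonneg hℓ (div_nonneg (by linarith) hb.le)
  have hpow : a ^ ℓ - b ^ ℓ ≤ a ^ ℓ * (ℓ * ((a - b) / b)) := by
    have h := one_sub_rpow_le_mul_inv_sub_one (div_pos hb ha) hℓ
    rw [div_rpow hb.le ha.le, inv_div, div_sub_one hb.ne'] at h
    have haℓ : 0 < a ^ ℓ := rpow_pos_of_pos ha ℓ
    calc a ^ ℓ - b ^ ℓ = a ^ ℓ * (1 - b ^ ℓ / a ^ ℓ) := by field_simp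
      _ ≤ a ^ ℓ * (ℓ * ((a - b) / b)) := by gcongr
  set ga := tamingFactor s ℓ a
  set gb := tamingFactor s ℓ b
  have hga : ga * (1 + s * a ^ ℓ) = 1 := inv_mul_cancel₀ (by positivity)
  have hgb : gb * (1 + s * b ^ ℓ) = 1 := inv_mul_cancel₀ (by positivity)
  have hdiff : gb - ga = s * (a ^ ℓ - b ^ ℓ) * ga * gb := by
    linear_combination ga * hgb - gb * hga
  have hga0 : 0 < ga := tamingFactor_pos hs ha.le
  have hgb1 : gb ≤ 1 := tamingFactor_le_one hs hb.le
  have hmono : b ^ ℓ ≤ a ^ ℓ := rpow_le_rpow hb.le hab hℓ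
  have hsaga : s * a ^ ℓ * ga ≤ 1 := by nlinarith
  calc gb - ga = s * (a ^ ℓ - b ^ ℓ) * ga * gb := hdiff
    _ ≤ s * (a ^ ℓ - b ^ ℓ) * ga := by
        apply mul_le_of_le_one_right _ hgb1
        have : 0 ≤ a ^ ℓ - b ^ ℓ := by linarith
        positivity
    _ ≤ s * (a ^ ℓ * (ℓ * ((a - b) / b))) * ga := by gcongr
    _ = (s * a ^ ℓ * ga) * (ℓ * ((a - b) / b)) := by ring
    _ ≤ ℓ * ((a - b) / b) := mul_le_of_le_one_left hK hsaga

lemma one_add_mul_tamingFactor_sub_le (hs : 0 ≤ s) (hℓ : 0 ≤ ℓ) (hb : 0 ≤ b) (hab : b ≤ a) :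
    (1 + a) * (tamingFactor s ℓ b - tamingFactor s ℓ a) ≤
      (3 * 2 ^ ℓ + 4 * ℓ + 3) * (s + (a - b)) := by
  have ha : 0 ≤ a := hb.trans hab
  have hga0 := tamingFactor_pos (ℓ := ℓ) hs ha
  have hgb1 := tamingFactor_le_one (ℓ := ℓ) hs hb
  have hΔ0 : 0 ≤ tamingFactor s ℓ b - tamingFactor s ℓ a :=
    sub_nonneg.mpr (tamingFactor_anti hs hℓ hb hab)
  have h2ℓ : 0 < (2 : ℝ) ^ ℓ := by positivity
  rcases le_or_gt a 2 with ha2 | ha2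
  · have hΔ : tamingFactor s ℓ b - tamingFactor s ℓ a ≤ s * 2 ^ ℓ := by
      have := one_sub_tamingFactor_le (ℓ := ℓ) hs ha
      have : s * a ^ ℓ ≤ s * 2 ^ ℓ := by gcongr
      linarith
    calc (1 + a) * (tamingFactor s ℓ b - tamingFactor s ℓ a) ≤ 3 * (s * 2 ^ ℓ) := by
          gcongr; linarith
      _ ≤ (3 * 2 ^ ℓ + 4 * ℓ + 3) * (s + (a - b)) := by nlinarith
  rcases le_or_gt b (a / 2) with hba | hba
  · calc (1 + a) * (tamingFactor s ℓ b - tamingFactor s ℓ a) ≤ (1 + a) * 1 := by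
          gcongr; linarith
      _ ≤ 3 * (a - b) := by linarith
      _ ≤ (3 * 2 ^ ℓ + 4 * ℓ + 3) * (s + (a - b)) := by nlinarith
  · have hb0 : 0 < b := by linarith
    calc (1 + a) * (tamingFactor s ℓ b - tamingFactor s ℓ a)
        ≤ (1 + a) * (ℓ * ((a - b) / b)) := by gcongr; exact tamingFactor_sub_le hs hℓ hb0 hab
      _ = ℓ * (a - b) * ((1 + a) / b) := by ring
      _ ≤ ℓ * (a - b) * 4 := by
          have : 0 ≤ ℓ * (a - b) := mul_nonneg hℓ (by linarith)
          gcongr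
          rw [div_le_iff₀ hb0]
          linarith
      _ ≤ (3 * 2 ^ ℓ + 4 * ℓ + 3) * (s + (a - b)) := by nlinarith

lemma one_add_mul_abs_tamingFactor_sub_le (hs : 0 ≤ s) (hℓ : 0 ≤ ℓ) (ha : 0 ≤ a) (hb : 0 ≤ b) :
    (1 + b) * |tamingFactor s ℓ a - tamingFactor s ℓ b| ≤
      (3 * 2 ^ ℓ + 4 * ℓ + 3) * (s + |a - b|) := by
  rcases le_total b a with hba | hab
  · rw [abs_sub_comm, abs_of_nonneg (sub_nonneg.mpr (tamingFactor_anti hs hℓ hb hba)),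
      abs_of_nonneg (sub_nonneg.mpr hba)]
    calc (1 + b) * (tamingFactor s ℓ b - tamingFactor s ℓ a)
        ≤ (1 + a) * (tamingFactor s ℓ b - tamingFactor s ℓ a) := by
          gcongr
          exact sub_nonneg.mpr (tamingFactor_anti hs hℓ hb hba)
      _ ≤ _ := one_add_mul_tamingFactor_sub_le hs hℓ hb hba
  · rw [abs_of_nonneg (sub_nonneg.mpr (tamingFactor_anti hs hℓ ha hab)), abs_sub_comm,
      abs_of_nonneg (sub_nonneg.mpr hab)]
    exact one_add_mul_tamingFactor_sub_le hs hℓ ha hab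

end TamingFactor

section PolynomialLipschitz

variable {σ : ℝ → ℝ} {c q : ℝ}

lemma abs_le_of_polynomial_lipschitz (hc : 0 ≤ c)
    (hσ : ∀ x y : ℝ, |σ x - σ y| ≤ c * (1 + |x| ^ q + |y| ^ q) * |x - y|) (y : ℝ) :
    |σ y| ≤ (|σ 0| + 2 * c) * (1 + |y| ^ q) * (1 + |y|) := by
  have h0 := hσ y 0
  rw [abs_zero, sub_zero] at h0
  have hyq : 0 ≤ |y| ^ q := by positivity
  have hweight : 1 + |y| ^ q + 0 ^ q ≤ 2 * (1 + |y| ^ q) := by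
    linarith [zero_rpow_le_one q]
  have hone : 1 ≤ (1 + |y| ^ q) * (1 + |y|) := by nlinarith [abs_nonneg y]
  calc |σ y| ≤ |σ 0| + |σ y - σ 0| := by linarith [abs_sub_abs_le_abs_sub (σ y) (σ 0)]
    _ ≤ |σ 0| + c * (2 * (1 + |y| ^ q)) * |y| := by grw [h0, hweight]
    _ ≤ |σ 0| * ((1 + |y| ^ q) * (1 + |y|)) + c * (2 * (1 + |y| ^ q)) * (1 + |y|) := by
        gcongr
        · exact le_mul_of_one_le_right (abs_nonneg _) hone
        · linarith
    _ = (|σ 0| + 2 * c) * (1 + |y| ^ q) * (1 + |y|) := by ring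

lemma abs_mul_tamingFactor_sub_le {s ℓ : ℝ} (hs : 0 ≤ s) (hℓ : 0 ≤ ℓ) (hc : 0 ≤ c)
    (hσ : ∀ x y : ℝ, |σ x - σ y| ≤ c * (1 + |x| ^ q + |y| ^ q) * |x - y|) (x y : ℝ) :
    |σ x * tamingFactor s ℓ (|x|) - σ y * tamingFactor s ℓ (|y|)|
      ≤ (c + (|σ 0| + 2 * c) * (3 * 2 ^ ℓ + 4 * ℓ + 3)) * (1 + |x| ^ q + |y| ^ q)
        * (s + |x - y|) := by
  set gx := tamingFactor s ℓ (|x|)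
  set gy := tamingFactor s ℓ (|y|)
  set C := 3 * 2 ^ ℓ + 4 * ℓ + 3
  set P := 1 + |x| ^ q + |y| ^ q
  have hC : 0 ≤ C := by positivity
  have hfirst : |(σ x - σ y) * gx| ≤ c * P * (s + |x - y|) := by
    rw [abs_mul, abs_of_pos (tamingFactor_pos hs (abs_nonneg x))]
    calc |σ x - σ y| * gx ≤ |σ x - σ y| :=
          mul_le_of_le_one_right (abs_nonneg _) (tamingFactor_le_one hs (abs_nonneg x))
      _ ≤ c * P * |x - y| := hσ x y
      _ ≤ c * P * (s + |x - y|) := by gcongr; linarith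
  have hsecond : |σ y * (gx - gy)| ≤ (|σ 0| + 2 * c) * C * P * (s + |x - y|) := by
    have hweight := one_add_mul_abs_tamingFactor_sub_le hs hℓ (abs_nonneg x) (abs_nonneg y)
    have hxy : s + abs (|x| - |y|) ≤ s + |x - y| :=
      add_le_add_right (abs_abs_sub_abs_le_abs_sub x y) s
    rw [abs_mul]
    calc |σ y| * |gx - gy|
        ≤ (|σ 0| + 2 * c) * (1 + |y| ^ q) * (1 + |y|) * |gx - gy| := by
          gcongr; exact abs_le_of_polynomial_lipschitz hc hσ y
      _ = (|σ 0| + 2 * c) * (1 + |y| ^ q) * ((1 + |y|) * |gx - gy|) := by ring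
      _ ≤ (|σ 0| + 2 * c) * P * (C * (s + |x - y|)) := by
          have hP : 1 + |y| ^ q ≤ P := by linarith [rpow_nonneg (abs_nonneg x) q]
          exact mul_le_mul (mul_le_mul_of_nonneg_left hP (by positivity))
            (hweight.trans (mul_le_mul_of_nonneg_left hxy hC)) (by positivity) (by positivity)
      _ = (|σ 0| + 2 * c) * C * P * (s + |x - y|) := by ring
  calc |σ x * gx - σ y * gy| = |(σ x - σ y) * gx + σ y * (gx - gy)| := by
        congr 1; ring
    _ ≤ |(σ x - σ y) * gx| + |σ y * (gx - gy)| := abs_add_le _ _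
    _ ≤ c * P * (s + |x - y|) + (|σ 0| + 2 * c) * C * P * (s + |x - y|) :=
        add_le_add hfirst hsecond
    _ = (c + (|σ 0| + 2 * c) * C) * P * (s + |x - y|) := by ring

end PolynomialLipschitz

theorem stmt_15_general (ℓμ ℓσ : ℝ) (hℓμ : 0 < ℓμ)
    (σ : ℝ → ℝ)
    (c : ℝ) (hc : 0 < c)
    (hA3 : ∀ x y : ℝ, |σ x - σ y| ≤ c * (1 + |x| ^ ℓσ + |y| ^ ℓσ) * |x - y|) :
    ∃ c' : ℝ, 0 < c' ∧ ∀ n : ℕ, 1 ≤ n → ∀ x y : ℝ,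
      |tame σ ℓμ n x - tame σ ℓμ n y| ≤
        c' * (1 + |x| ^ ℓσ + |y| ^ ℓσ) * (1 / Real.sqrt (n : ℝ) + |x - y|) := by
  refine ⟨c + (|σ 0| + 2 * c) * (3 * 2 ^ ℓμ + 4 * ℓμ + 3), by positivity, fun n _ x y => ?_⟩
  simpa only [tame, tamingFactor, div_eq_mul_inv] using
    abs_mul_tamingFactor_sub_le (s := 1 / √(n : ℝ)) (by positivity) hℓμ.le hc.le hA3 x y

/-- If `σ` satisfies (A3) with `ℓσ ∈ [0, ℓμ/2]`, `ℓμ ∈ (0,∞)`, then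
there is `c' ∈ (0,∞)` such that for all `n ≥ 1` and all `x, y`,
`|σ_n(x) - σ_n(y)| ≤ c'·(1 + |x|^ℓσ + |y|^ℓσ)·(n^{-1/2} + |x - y|)`. -/
theorem stmt_15 (ℓμ ℓσ : ℝ) (hℓμ : 0 < ℓμ) (hℓσ0 : 0 ≤ ℓσ) (hℓσ : ℓσ ≤ ℓμ / 2)
    (σ : ℝ → ℝ)
    (c : ℝ) (hc : 0 < c)
    (hA3 : ∀ x y : ℝ, |σ x - σ y| ≤ c * (1 + |x| ^ ℓσ + |y| ^ ℓσ) * |x - y|) :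
    ∃ c' : ℝ, 0 < c' ∧ ∀ n : ℕ, 1 ≤ n → ∀ x y : ℝ,
      |tame σ ℓμ n x - tame σ ℓμ n y| ≤
        c' * (1 + |x| ^ ℓσ + |y| ^ ℓσ) * (1 / Real.sqrt (n : ℝ) + |x - y|) :=
  stmt_15_general ℓμ ℓσ hℓμ σ c hc hA3
end

section
/- Let ℓ_μ ∈ (0,∞) and assume μ : ℝ → ℝ satisfies the global polynomial Lipschitz condition (A2')(ii): there exists c ∈ (0,∞) such that for all x, y ∈ ℝ, |μ(x)−μ(y)| ≤ c·(1+|x|^{ℓ_μ}+|y|^{ℓ_μ})·|x−y|. Then there exists c' ∈ (0,∞) such that for all n ∈ ℕ with n ≥ 1 and all x, y ∈ ℝ, |μ_n(x) − μ_n(y)| ≤ c'·(1 + |x|^{ℓ_μ} + |y|^{ℓ_μ})·(n^{−1/2} + |x − y|). -/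
open Real

lemma mvt_rpow (ℓ : ℝ) (hℓ : 0 < ℓ) (a b : ℝ) (hb : 0 < b)
    (h1 : b/2 ≤ a) (h2 : a ≤ 3/2 * b) :
    |a ^ ℓ - b ^ ℓ| ≤
      ℓ * max ((1/2:ℝ) ^ (ℓ-1)) ((3/2:ℝ) ^ (ℓ-1)) * b ^ (ℓ-1) * |a - b| := by
  set K : ℝ := max ((1/2:ℝ) ^ (ℓ-1)) ((3/2:ℝ) ^ (ℓ-1)) with hK
  set S : Set ℝ := Set.Icc (b/2) (3/2*b) with hS
  have hconv : Convex ℝ S := convex_Icc _ _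
  have hmem : ∀ t ∈ S, (0:ℝ) < t := fun t ht => lt_of_lt_of_le (by linarith) ht.1
  have hderiv : ∀ t ∈ S, HasDerivWithinAt (fun u : ℝ => u ^ ℓ) (ℓ * t ^ (ℓ-1)) S t := by
    intro t ht
    exact (Real.hasDerivAt_rpow_const (Or.inl (hmem t ht).ne')).hasDerivWithinAt
  have hbound : ∀ t ∈ S, ‖ℓ * t ^ (ℓ-1)‖ ≤ ℓ * (K * b ^ (ℓ-1)) := by
    intro t ht
    have ht0 := hmem t ht
    rw [Real.norm_eq_abs, abs_mul, abs_of_pos hℓ, abs_of_pos (Real.rpow_pos_of_pos ht0 _)]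
    have key : t ^ (ℓ-1) ≤ K * b ^ (ℓ-1) := by
      rcases le_or_gt 1 ℓ with h | h
      · calc t ^ (ℓ-1) ≤ ((3/2:ℝ)*b) ^ (ℓ-1) :=
              Real.rpow_le_rpow ht0.le ht.2 (by linarith)
          _ = (3/2:ℝ) ^ (ℓ-1) * b ^ (ℓ-1) := Real.mul_rpow (by norm_num) hb.le
          _ ≤ K * b ^ (ℓ-1) := by
              apply mul_le_mul_of_nonneg_right (le_max_right _ _)
                (Real.rpow_nonneg hb.le _)
      · have h' : t ^ (ℓ-1) ≤ (b/2) ^ (ℓ-1) :=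
          Real.rpow_le_rpow_of_nonpos (by linarith) ht.1 (by linarith)
        calc t ^ (ℓ-1) ≤ ((1/2:ℝ)*b) ^ (ℓ-1) := by
              rw [show (1/2:ℝ)*b = b/2 by ring]; exact h'
          _ = (1/2:ℝ) ^ (ℓ-1) * b ^ (ℓ-1) := Real.mul_rpow (by norm_num) hb.le
          _ ≤ K * b ^ (ℓ-1) := by
              apply mul_le_mul_of_nonneg_right (le_max_left _ _)
                (Real.rpow_nonneg hb.le _)
    exact mul_le_mul_of_nonneg_left key hℓ.le
  have haS : a ∈ S := ⟨h1, h2⟩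
  have hbS : b ∈ S := ⟨by linarith, by linarith⟩
  have hmvt := hconv.norm_image_sub_le_of_norm_hasDerivWithin_le hderiv hbound hbS haS
  simp only [Real.norm_eq_abs] at hmvt
  calc |a ^ ℓ - b ^ ℓ| ≤ ℓ * (K * b ^ (ℓ-1)) * |a - b| := hmvt
    _ = ℓ * K * b ^ (ℓ-1) * |a - b| := by ring

set_option maxHeartbeats 1600000 in
/-- If `μ` satisfies the global polynomial Lipschitz condition (A2')(ii)
with `ℓμ ∈ (0,∞)`, then there is `c' ∈ (0,∞)` such that for all `n ≥ 1` and all `x, y`,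
`|μ_n(x) - μ_n(y)| ≤ c'·(1 + |x|^ℓμ + |y|^ℓμ)·(n^{-1/2} + |x - y|)`. -/
theorem stmt_16 (ℓμ : ℝ) (hℓμ : 0 < ℓμ)
    (μ : ℝ → ℝ)
    (c : ℝ) (hc : 0 < c)
    (hA2'ii : ∀ x y : ℝ, |μ x - μ y| ≤ c * (1 + |x| ^ ℓμ + |y| ^ ℓμ) * |x - y|) :
    ∃ c' : ℝ, 0 < c' ∧ ∀ n : ℕ, 1 ≤ n → ∀ x y : ℝ,
      |tame μ ℓμ n x - tame μ ℓμ n y| ≤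
        c' * (1 + |x| ^ ℓμ + |y| ^ ℓμ) * (1 / Real.sqrt (n : ℝ) + |x - y|) := by
  set K : ℝ := max ((1/2:ℝ) ^ (ℓμ-1)) ((3/2:ℝ) ^ (ℓμ-1)) with hKdef
  have hK0 : 0 < K := lt_max_of_lt_left (Real.rpow_pos_of_pos (by norm_num) _)
  clear_value K
  have hm0 : 0 ≤ |μ 0| := abs_nonneg _
  refine ⟨c + |μ 0| + 4*c + c*(ℓμ*K), by linarith [mul_pos hc (mul_pos hℓμ hK0)], ?_⟩
  intro n hn x y
  have hn0 : (0:ℝ) < (n:ℝ) := by exact_mod_cast hn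
  have hsq : (0:ℝ) < Real.sqrt n := Real.sqrt_pos.mpr hn0
  have hsq1 : (1:ℝ) ≤ Real.sqrt n := by
    rw [show (1:ℝ) = Real.sqrt 1 from Real.sqrt_one.symm]
    exact Real.sqrt_le_sqrt (by exact_mod_cast hn)
  set s : ℝ := 1 / Real.sqrt (n:ℝ) with hsdef
  have hs0 : 0 < s := by positivity
  set A : ℝ := |x| ^ ℓμ with hAdef
  set B : ℝ := |y| ^ ℓμ with hBdef
  have hA0 : 0 ≤ A := Real.rpow_nonneg (abs_nonneg x) _
  have hB0 : 0 ≤ B := Real.rpow_nonneg (abs_nonneg y) _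
  set Dx : ℝ := 1 + s * A with hDxdef
  set Dy : ℝ := 1 + s * B with hDydef
  set d : ℝ := |x - y| with hddef
  have hd0 : 0 ≤ d := abs_nonneg _
  -- the algebraic identity (uses definitional unfolding, so done before clear_value)
  have hx' : tame μ ℓμ n x = μ x / Dx := rfl
  have hy' : tame μ ℓμ n y = μ y / Dy := rfl
  clear_value s A B Dx Dy d
  have hDx1 : 1 ≤ Dx := by linarith [mul_nonneg hs0.le hA0]
  have hDy1 : 1 ≤ Dy := by linarith [mul_nonneg hs0.le hB0]
  have hDx0 : 0 < Dx := lt_of_lt_of_le one_pos hDx1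
  have hDy0 : 0 < Dy := lt_of_lt_of_le one_pos hDy1
  have hDxy1 : 1 ≤ Dx * Dy := one_le_mul_of_one_le_of_one_le hDx1 hDy1
  have hDxy0 : 0 < Dx * Dy := mul_pos hDx0 hDy0
  have hsA : s * A ≤ Dx := by linarith
  have hsB : s * B ≤ Dy := by linarith
  have hBA : |B - A| ≤ A + B := by
    have h1 := abs_sub B A
    rw [abs_of_nonneg hA0, abs_of_nonneg hB0] at h1
    linarith
  have hsBA0 : 0 ≤ s * |B - A| := mul_nonneg hs0.le (abs_nonneg _)
  have h1AB : (0:ℝ) ≤ 1 + A + B := by linarith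
  have h1B : (0:ℝ) ≤ 1 + B := by linarith
  have hsd0 : (0:ℝ) ≤ s + d := by linarith
  have hDyx : Dy - Dx = s*(B - A) := by rw [hDxdef, hDydef]; ring
  have hident : tame μ ℓμ n x - tame μ ℓμ n y
      = (μ x - μ y)/Dx + μ y * (s*(B - A))/(Dx*Dy) := by
    rw [hx', hy', ← hDyx]
    have h1 : Dx ≠ 0 := hDx0.ne'
    have h2 : Dy ≠ 0 := hDy0.ne'
    field_simp
    ring
  -- triangle inequality
  have htri : |tame μ ℓμ n x - tame μ ℓμ n y|
      ≤ |μ x - μ y| / Dx + |μ y| * (s * |B - A|) / (Dx * Dy) := by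
    rw [hident]
    refine (abs_add_le _ _).trans ?_
    rw [abs_div, abs_div, abs_mul, abs_mul, abs_of_pos hs0, abs_of_pos hDx0,
      abs_of_pos hDxy0]
  -- first term
  have hT1 : |μ x - μ y| / Dx ≤ c * (1 + A + B) * d := by
    refine (div_le_self (abs_nonneg _) hDx1).trans ?_
    rw [hAdef, hBdef, hddef]
    exact hA2'ii x y
  -- growth bound on μ y
  have hμy : |μ y| ≤ |μ 0| + c * (1 + B) * |y| := by
    have h := hA2'ii y 0
    simp only [abs_zero, Real.zero_rpow hℓμ.ne', add_zero, sub_zero] at h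
    rw [← hBdef] at h
    have h2 := abs_sub_abs_le_abs_sub (μ y) (μ 0)
    linarith
  -- piece with |μ 0|
  have hP1 : |μ 0| * (s * |B - A|) ≤ |μ 0| * ((1+A+B)*(s+d)*(Dx*Dy)) := by
    apply mul_le_mul_of_nonneg_left _ hm0
    have e1 : s * |B - A| ≤ s * (1 + A + B) :=
      mul_le_mul_of_nonneg_left (by linarith) hs0.le
    have e2 : s * (1+A+B) ≤ (1+A+B)*(s+d) := by
      linarith [mul_nonneg hA0 hd0, mul_nonneg hB0 hd0]
    have e3 : (1+A+B)*(s+d) ≤ (1+A+B)*(s+d)*(Dx*Dy) :=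
      le_mul_of_one_le_right (mul_nonneg h1AB hsd0) hDxy1
    linarith
  -- main piece, two cases
  have hP2 : c * (1 + B) * |y| * (s * |B - A|)
      ≤ (4*c + c*(ℓμ*K)) * ((1+A+B)*(s+d)) * (Dx*Dy) := by
    have hcK : 0 ≤ c*(ℓμ*K) := le_of_lt (mul_pos hc (mul_pos hℓμ hK0))
    rcases le_or_gt |y| (2*d) with hcase | hcase
    · -- |y| small
      have e1 : s * |B - A| ≤ 2 * (Dx * Dy) := by
        have i1 : s * |B - A| ≤ s*A + s*B := by
          linarith [mul_le_mul_of_nonneg_left hBA hs0.le]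
        have i2 : Dx ≤ Dx * Dy := le_mul_of_one_le_right hDx0.le hDy1
        have i3 : Dy ≤ Dx * Dy := le_mul_of_one_le_left hDy0.le hDx1
        linarith
      calc c*(1+B)*|y| * (s * |B - A|) ≤ c*(1+B)*(2*d)*(2*(Dx*Dy)) := by
            apply mul_le_mul _ e1 hsBA0 _
            · exact mul_le_mul_of_nonneg_left hcase (mul_nonneg hc.le h1B)
            · exact mul_nonneg (mul_nonneg hc.le h1B) (by linarith)
        _ = 4*c*((1+B)*d)*(Dx*Dy) := by ring
        _ ≤ (4*c + c*(ℓμ*K)) * ((1+A+B)*(s+d)) * (Dx*Dy) := by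
            apply mul_le_mul_of_nonneg_right _ hDxy0.le
            have g1 : (1+B)*d ≤ (1+A+B)*(s+d) := by
              linarith [mul_nonneg hA0 hd0, mul_nonneg hs0.le hB0,
                mul_nonneg hA0 hs0.le]
            calc 4*c*((1+B)*d) ≤ 4*c*((1+A+B)*(s+d)) :=
                  mul_le_mul_of_nonneg_left g1 (by linarith)
              _ ≤ (4*c + c*(ℓμ*K)) * ((1+A+B)*(s+d)) := by
                  apply mul_le_mul_of_nonneg_right (by linarith) (mul_nonneg h1AB hsd0)
    · -- |y| large : mean value estimate
      have hb : 0 < |y| := lt_of_le_of_lt (by linarith : (0:ℝ) ≤ 2*d) hcase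
      have hab := abs_abs_sub_abs_le_abs_sub x y
      rw [← hddef] at hab
      have hab' := abs_le.mp hab
      have h1 : |y|/2 ≤ |x| := by linarith [hab'.1]
      have h2 : |x| ≤ 3/2*|y| := by linarith [hab'.2]
      have hmvt := mvt_rpow ℓμ hℓμ |x| |y| hb h1 h2
      rw [← hKdef, ← hAdef, ← hBdef] at hmvt
      have hry0 : (0:ℝ) ≤ |y| ^ (ℓμ-1) := Real.rpow_nonneg (abs_nonneg y) _
      have hmvt' : |B - A| ≤ ℓμ * K * |y|^(ℓμ-1) * d := by
        rw [abs_sub_comm]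
        refine hmvt.trans ?_
        apply mul_le_mul_of_nonneg_left hab
        exact mul_nonneg (mul_nonneg hℓμ.le hK0.le) hry0
      have hyB : |y| * |y|^(ℓμ-1) = B := by
        rw [hBdef]
        calc |y| * |y|^(ℓμ-1) = |y|^(1:ℝ) * |y|^(ℓμ-1) := by rw [Real.rpow_one]
          _ = |y|^(1+(ℓμ-1)) := (Real.rpow_add hb _ _).symm
          _ = |y|^ℓμ := by ring_nf
      calc c*(1+B)*|y| * (s * |B - A|)
          ≤ c*(1+B)*|y| * (s*(ℓμ*K*|y|^(ℓμ-1)*d)) := by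
            apply mul_le_mul_of_nonneg_left
              (mul_le_mul_of_nonneg_left hmvt' hs0.le)
              (mul_nonneg (mul_nonneg hc.le h1B) (abs_nonneg y))
        _ = c*(ℓμ*K)*d*((1+B)*(s*(|y| * |y|^(ℓμ-1)))) := by ring
        _ = c*(ℓμ*K)*d*((1+B)*(s*B)) := by rw [hyB]
        _ ≤ c*(ℓμ*K)*d*((1+A+B)*(Dx*Dy)) := by
            apply mul_le_mul_of_nonneg_left _ (mul_nonneg hcK hd0)
            apply mul_le_mul (by linarith) (hsB.trans (le_mul_of_one_le_left hDy0.le hDx1))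
              (mul_nonneg hs0.le hB0) (by linarith)
        _ = (c*(ℓμ*K)*d*(1+A+B))*(Dx*Dy) := by ring
        _ ≤ ((4*c + c*(ℓμ*K)) * ((1+A+B)*(s+d))) * (Dx*Dy) := by
            apply mul_le_mul_of_nonneg_right _ hDxy0.le
            calc c*(ℓμ*K)*d*(1+A+B) ≤ (4*c + c*(ℓμ*K))*d*(1+A+B) := by
                  apply mul_le_mul_of_nonneg_right _ h1AB
                  apply mul_le_mul_of_nonneg_right (by linarith) hd0
              _ ≤ (4*c + c*(ℓμ*K)) * ((1+A+B)*(s+d)) := by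
                  linarith [mul_nonneg (by linarith : (0:ℝ) ≤ 4*c + c*(ℓμ*K))
                      (mul_nonneg hs0.le h1AB)]
  -- combine second term
  have hsecond : |μ y| * (s * |B - A|) / (Dx*Dy)
      ≤ (|μ 0| + 4*c + c*(ℓμ*K)) * ((1+A+B)*(s+d)) := by
    rw [div_le_iff₀ hDxy0]
    calc |μ y| * (s * |B - A|) ≤ (|μ 0| + c*(1+B)*|y|) * (s * |B - A|) :=
          mul_le_mul_of_nonneg_right hμy hsBA0
      _ = |μ 0| * (s * |B - A|) + c*(1+B)*|y| * (s * |B - A|) := by ring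
      _ ≤ |μ 0| * ((1+A+B)*(s+d)*(Dx*Dy))
            + (4*c + c*(ℓμ*K)) * ((1+A+B)*(s+d)) * (Dx*Dy) := add_le_add hP1 hP2
      _ = (|μ 0| + 4*c + c*(ℓμ*K)) * ((1+A+B)*(s+d)) * (Dx*Dy) := by ring
  calc |tame μ ℓμ n x - tame μ ℓμ n y|
      ≤ |μ x - μ y| / Dx + |μ y| * (s * |B - A|) / (Dx * Dy) := htri
    _ ≤ c * (1 + A + B) * d + (|μ 0| + 4*c + c*(ℓμ*K)) * ((1+A+B)*(s+d)) :=
        add_le_add hT1 hsecond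
    _ ≤ (c + |μ 0| + 4*c + c*(ℓμ*K)) * (1 + A + B) * (s + d) := by
        linarith [mul_nonneg (mul_nonneg hc.le h1AB) hs0.le]
end

section
/- Let ℓ_μ ∈ (0,∞), ℓ_σ ∈ [0, ℓ_μ/2] and assume σ : ℝ → ℝ satisfies condition (A3): there exists c ∈ (0,∞) such that for all x, y ∈ ℝ, |σ(x)−σ(y)| ≤ c·(1+|x|^{ℓ_σ}+|y|^{ℓ_σ})·|x−y|. Then there exists c' ∈ (0,∞) such that for all n ∈ ℕ with n ≥ 1 and all x ∈ ℝ, |σ_n(x) − σ(x)| ≤ (c'/√n)·(1 + |x|^{ℓ_μ+ℓ_σ+1}) and |σ_n(x)² − σ(x)²| ≤ (c'/√n)·(1 + |x|^{ℓ_μ+2ℓ_σ+2}). -/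
lemma rpow_le_one_add (t p q : ℝ) (ht : 0 ≤ t) (hp : 0 ≤ p) (hpq : p ≤ q) :
    t ^ p ≤ 1 + t ^ q := by
  rcases le_or_gt t 1 with h | h
  · have h1 := Real.rpow_le_one ht h hp
    have h2 := Real.rpow_nonneg ht q
    linarith
  · have h1 := Real.rpow_le_rpow_of_exponent_le h.le hpq
    linarith

lemma arith_bound1 (K b tp S T : ℝ) (hK : 0 < K) (hb : 0 ≤ b)
    (htp : 0 ≤ tp) (hS : 0 ≤ S) (hT : 0 ≤ T)
    (e1 : tp ≤ 1 + T) (e2 : tp * S = T) :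
    K * (1 + S) * (b * tp) ≤ (8 * K ^ 2 + 2 * K) * b * (1 + T) := by
  have expand : K * (1 + S) * (b * tp) = K * b * (tp + tp * S) := by ring
  rw [expand, e2]
  have h : tp + T ≤ 2 * (1 + T) := by linarith
  have hKb : 0 ≤ K * b := mul_nonneg hK.le hb
  calc K * b * (tp + T) ≤ K * b * (2 * (1 + T)) := mul_le_mul_of_nonneg_left h hKb
    _ ≤ (8 * K ^ 2 + 2 * K) * b * (1 + T) := by nlinarith [mul_nonneg hKb (by linarith : (0:ℝ) ≤ 1 + T), sq_nonneg K, mul_nonneg (mul_nonneg (sq_nonneg K) hb) (by linarith : (0:ℝ) ≤ 1 + T)]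

lemma arith_bound2 (K b tp S T U : ℝ) (hK : 0 < K) (hb : 0 ≤ b)
    (htp : 0 ≤ tp) (hS : 0 ≤ S) (hT : 0 ≤ T) (hU : 0 ≤ U)
    (e3 : tp ≤ 1 + U) (e4 : T ≤ 1 + U) (e2 : tp * S = T) (e5 : tp * S ^ 2 = U) :
    2 * (K * (1 + S)) ^ 2 * (b * tp) ≤ (8 * K ^ 2 + 2 * K) * b * (1 + U) := by
  have expand : 2 * (K * (1 + S)) ^ 2 * (b * tp)
      = 2 * (K ^ 2 * b) * (tp + 2 * (tp * S) + tp * S ^ 2) := by ring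
  rw [expand, e2, e5]
  have h : tp + 2 * T + U ≤ 4 * (1 + U) := by linarith
  have hKb : 0 ≤ K ^ 2 * b := mul_nonneg (sq_nonneg K) hb
  calc 2 * (K ^ 2 * b) * (tp + 2 * T + U)
      ≤ 2 * (K ^ 2 * b) * (4 * (1 + U)) := by
        have := mul_le_mul_of_nonneg_left h (by positivity : (0:ℝ) ≤ 2 * (K ^ 2 * b))
        linarith
    _ ≤ (8 * K ^ 2 + 2 * K) * b * (1 + U) := by
        nlinarith [mul_nonneg (mul_nonneg hK.le hb) (by linarith : (0:ℝ) ≤ 1 + U)]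

/-- If `σ` satisfies (A3) with `ℓσ ∈ [0, ℓμ/2]`, `ℓμ ∈ (0,∞)`, then
there is `c' ∈ (0,∞)` such that for all `n ≥ 1` and all `x`,
`|σ_n(x) - σ(x)| ≤ (c'/√n)·(1 + |x|^{ℓμ+ℓσ+1})` and
`|σ_n(x)² - σ(x)²| ≤ (c'/√n)·(1 + |x|^{ℓμ+2ℓσ+2})`. -/
theorem stmt_18 (ℓμ ℓσ : ℝ) (hℓμ : 0 < ℓμ) (hℓσ0 : 0 ≤ ℓσ) (hℓσ : ℓσ ≤ ℓμ / 2)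
    (σ : ℝ → ℝ)
    (c : ℝ) (hc : 0 < c)
    (hA3 : ∀ x y : ℝ, |σ x - σ y| ≤ c * (1 + |x| ^ ℓσ + |y| ^ ℓσ) * |x - y|) :
    ∃ c' : ℝ, 0 < c' ∧ ∀ n : ℕ, 1 ≤ n → ∀ x : ℝ,
      |tame σ ℓμ n x - σ x| ≤ c' / Real.sqrt (n : ℝ) * (1 + |x| ^ (ℓμ + ℓσ + 1)) ∧
      |(tame σ ℓμ n x) ^ 2 - (σ x) ^ 2| ≤
        c' / Real.sqrt (n : ℝ) * (1 + |x| ^ (ℓμ + 2 * ℓσ + 2)) := by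
  have hσ0 : 0 ≤ |σ 0| := abs_nonneg _
  set K := |σ 0| + 3 * c with hKdef
  have hK : 0 < K := by positivity
  refine ⟨8 * K ^ 2 + 2 * K, by positivity, ?_⟩
  intro n hn x
  set t := |x| with htdef
  have ht : 0 ≤ t := abs_nonneg x
  have hn1 : (1 : ℝ) ≤ (n : ℝ) := by exact_mod_cast hn
  have hsn : 1 ≤ Real.sqrt (n : ℝ) := by
    rw [show (1 : ℝ) = Real.sqrt 1 by simp]
    exact Real.sqrt_le_sqrt hn1
  have hsn0 : 0 < Real.sqrt (n : ℝ) := lt_of_lt_of_le one_pos hsn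
  set b := 1 / Real.sqrt (n : ℝ) with hbdef
  have hb : 0 < b := by positivity
  set a := b * t ^ ℓμ with hadef
  have htℓμ : 0 ≤ t ^ ℓμ := Real.rpow_nonneg ht _
  have ha : 0 ≤ a := by positivity
  have h1a : 0 < 1 + a := by linarith
  set S := t ^ (ℓσ + 1) with hSdef
  set T := t ^ (ℓμ + ℓσ + 1) with hTdef
  set U := t ^ (ℓμ + 2 * ℓσ + 2) with hUdef
  have hS : 0 ≤ S := Real.rpow_nonneg ht _
  have hT : 0 ≤ T := Real.rpow_nonneg ht _
  have hU : 0 ≤ U := Real.rpow_nonneg ht _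
  -- σ growth bound
  have hσx : |σ x| ≤ K * (1 + S) := by
    have h0 := hA3 x 0
    simp only [sub_zero, abs_zero] at h0
    have h01 : (0 : ℝ) ^ ℓσ ≤ 1 := Real.rpow_le_one le_rfl zero_le_one hℓσ0
    have habs : |σ x| - |σ 0| ≤ |σ x - σ 0| := abs_sub_abs_le_abs_sub _ _
    have htS : t ≤ 1 + S := by
      have := rpow_le_one_add t 1 (ℓσ + 1) ht zero_le_one (by linarith)
      simpa [Real.rpow_one] using this
    have hts : t ^ ℓσ * t = S := by
      rw [hSdef, Real.rpow_add_of_nonneg ht hℓσ0 zero_le_one, Real.rpow_one]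
    have htℓσ : 0 ≤ t ^ ℓσ := Real.rpow_nonneg ht _
    nlinarith [mul_le_mul_of_nonneg_right h01 (mul_nonneg hc.le ht),
      mul_nonneg htℓσ ht, mul_nonneg hc.le (mul_nonneg htℓσ ht)]
  -- key identity for the difference
  have htame : tame σ ℓμ n x = σ x / (1 + a) := rfl
  have hdiff : |tame σ ℓμ n x - σ x| = |σ x| * a / (1 + a) := by
    have h : σ x / (1 + a) - σ x = -(σ x * a) / (1 + a) := by
      field_simp
      ring
    rw [htame, h, abs_div, abs_neg, abs_mul, abs_of_nonneg ha, abs_of_pos h1a]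
  have hd1 : |tame σ ℓμ n x - σ x| ≤ |σ x| * a := by
    rw [hdiff]
    exact div_le_self (by positivity) (by linarith)
  have htame_le : |tame σ ℓμ n x| ≤ |σ x| := by
    rw [htame, abs_div, abs_of_pos h1a]
    exact div_le_self (abs_nonneg _) (by linarith)
  -- exponent arithmetic
  have e1 : t ^ ℓμ ≤ 1 + T := rpow_le_one_add t ℓμ (ℓμ + ℓσ + 1) ht hℓμ.le (by linarith)
  have e2 : t ^ ℓμ * S = T := by
    rw [hSdef, hTdef, show ℓμ + ℓσ + 1 = ℓμ + (ℓσ + 1) by ring,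
      Real.rpow_add_of_nonneg ht hℓμ.le (by linarith)]
  have e3 : t ^ ℓμ ≤ 1 + U := rpow_le_one_add t ℓμ (ℓμ + 2 * ℓσ + 2) ht hℓμ.le (by linarith)
  have e4 : T ≤ 1 + U := rpow_le_one_add t (ℓμ + ℓσ + 1) (ℓμ + 2 * ℓσ + 2) ht
    (by linarith) (by linarith)
  have e5 : t ^ ℓμ * S ^ 2 = U := by
    rw [hSdef, hUdef, sq, ← Real.rpow_add_of_nonneg ht (by linarith) (by linarith),
      ← Real.rpow_add_of_nonneg ht (by linarith) (by linarith)]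
    ring_nf
  have hgoal1 : (8 * K ^ 2 + 2 * K) / Real.sqrt (n : ℝ) * (1 + T)
      = (8 * K ^ 2 + 2 * K) * b * (1 + T) := by
    rw [hbdef]; ring
  have hgoal2 : (8 * K ^ 2 + 2 * K) / Real.sqrt (n : ℝ) * (1 + U)
      = (8 * K ^ 2 + 2 * K) * b * (1 + U) := by
    rw [hbdef]; ring
  constructor
  · rw [hgoal1]
    refine hd1.trans ?_
    have hσa : |σ x| * a ≤ K * (1 + S) * a :=
      mul_le_mul_of_nonneg_right hσx ha
    refine hσa.trans ?_
    rw [hadef]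
    exact arith_bound1 K b (t ^ ℓμ) S T hK hb.le htℓμ hS hT e1 e2
  · rw [hgoal2]
    have h2a : |tame σ ℓμ n x ^ 2 - σ x ^ 2| ≤ |σ x| * a * (2 * |σ x|) := by
      have hfac : tame σ ℓμ n x ^ 2 - σ x ^ 2
          = (tame σ ℓμ n x - σ x) * (tame σ ℓμ n x + σ x) := by ring
      rw [hfac, abs_mul]
      have hsum : |tame σ ℓμ n x + σ x| ≤ 2 * |σ x| :=
        (abs_add_le _ _).trans (by linarith)
      exact mul_le_mul hd1 hsum (abs_nonneg _) (by positivity)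
    refine h2a.trans ?_
    have hσ2 : |σ x| ^ 2 ≤ (K * (1 + S)) ^ 2 :=
      pow_le_pow_left₀ (abs_nonneg _) hσx 2
    have hmain : |σ x| * a * (2 * |σ x|) = 2 * |σ x| ^ 2 * a := by ring
    rw [hmain]
    have hstep : 2 * |σ x| ^ 2 * a ≤ 2 * (K * (1 + S)) ^ 2 * a := by
      have h2 := mul_le_mul_of_nonneg_right hσ2 ha
      linarith
    refine hstep.trans ?_
    rw [hadef]
    exact arith_bound2 K b (t ^ ℓμ) S T U hK hb.le htℓμ hS hT hU e3 e4 e2 e5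
end
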